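/- arXiv:1612.00484 — 2 statements merged into one kernel-verified Lean document; each statement's English description precedes it below -/
import Mathlib

section
/- Safety of the engine (Proposition 1): if Eng --α1--> … --αn--> Eng' is any execution trace of the engine CPS, then every αi ∈ {τ, tick} (in particular no output on channel warning ever occurs), and moreover there exists Eng'' and α ∈ {τ, tick} such that Eng' --α--> Eng'' (the engine never deadlocks). -/
namespace CCPS

/-! ## Names and values -/

abbrev Chan := ℕ
abbrev SensName := ℕ
abbrev ActName := ℕ
abbrev Val := ℝ

/-! ## Processes (value binders as functions, process variables in de Bruijn style) -/

inductive Proc : Type where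
  | nil   : Proc
  | pvar  : ℕ → Proc
  | tick  : Proc → Proc
  | par   : Proc → Proc → Proc
  | out   : Chan → Val → Proc → Proc → Proc      -- ⌊c̄⟨v⟩.P⌋Q
  | inp   : Chan → (Val → Proc) → Proc → Proc    -- ⌊c(x).P⌋Q
  | read  : SensName → (Val → Proc) → Proc → Proc -- ⌊s?(x).P⌋Q
  | write : ActName → Val → Proc → Proc → Proc   -- ⌊a!⟨v⟩.P⌋Q
  | res   : Proc → Chan → Proc                   -- P∖c
  | fix   : Proc → Proc                          -- fix X.P  (binds de Bruijn index 0)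

/-- Lift (shift) all process variables ≥ cutoff `c` by one. -/
def Proc.lift (c : ℕ) : Proc → Proc
  | .nil => .nil
  | .pvar m => if m < c then .pvar m else .pvar (m+1)
  | .tick P => .tick (Proc.lift c P)
  | .par P Q => .par (Proc.lift c P) (Proc.lift c Q)
  | .out ch v P Q => .out ch v (Proc.lift c P) (Proc.lift c Q)
  | .inp ch f Q => .inp ch (fun v => Proc.lift c (f v)) (Proc.lift c Q)
  | .read s f Q => .read s (fun v => Proc.lift c (f v)) (Proc.lift c Q)
  | .write a v P Q => .write a v (Proc.lift c P) (Proc.lift c Q)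
  | .res P ch => .res (Proc.lift c P) ch
  | .fix P => .fix (Proc.lift (c+1) P)

/-- Substitute process variable `n` by `R`. -/
def Proc.subst : Proc → ℕ → Proc → Proc
  | .nil, _, _ => .nil
  | .pvar m, n, R => if m = n then R else if n < m then .pvar (m-1) else .pvar m
  | .tick P, n, R => .tick (Proc.subst P n R)
  | .par P Q, n, R => .par (Proc.subst P n R) (Proc.subst Q n R)
  | .out ch v P Q, n, R => .out ch v (Proc.subst P n R) (Proc.subst Q n R)
  | .inp ch f Q, n, R => .inp ch (fun v => Proc.subst (f v) n R) (Proc.subst Q n R)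
  | .read s f Q, n, R => .read s (fun v => Proc.subst (f v) n R) (Proc.subst Q n R)
  | .write a v P Q, n, R => .write a v (Proc.subst P n R) (Proc.subst Q n R)
  | .res P ch, n, R => .res (Proc.subst P n R) ch
  | .fix P, n, R => .fix (Proc.subst P (n+1) (Proc.lift 0 R))

/-- Unfolding of recursion: P[fix X.P / X]. -/
def Proc.unfold (P : Proc) : Proc := Proc.subst P 0 (.fix P)

/-! ## Labels -/

inductive Label : Type where
  | tick  : Label
  | tau   : Label
  | out   : Chan → Val → Label     -- c̄v
  | inp   : Chan → Val → Label     -- cv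
  | write : ActName → Val → Label  -- a!v
  | read  : SensName → Val → Label -- s?v

/-! ## Labelled transition system for processes.

Untimed transitions `UStep` (labels different from tick) are defined first;
then timed transitions `TStep` (which use the absence of τ-transitions
negatively) are defined on top of them, and `Step` combines the two. -/

inductive UStep : Proc → Label → Proc → Prop where
  | outp  : UStep (.out c v P Q) (.out c v) P
  | inpp  : UStep (.inp c f Q) (.inp c v) (f v)
  | write : UStep (.write a v P Q) (.write a v) P
  | read  : UStep (.read s f Q) (.read s v) (f v)
  | comL  : UStep P (.out c v) P' → UStep Q (.inp c v) Q' →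
            UStep (.par P Q) .tau (.par P' Q')
  | comR  : UStep P (.inp c v) P' → UStep Q (.out c v) Q' →
            UStep (.par P Q) .tau (.par P' Q')
  | parL  : UStep P l P' → l ≠ .tick → UStep (.par P Q) l (.par P' Q)
  | parR  : UStep Q l Q' → l ≠ .tick → UStep (.par P Q) l (.par P Q')
  | res   : UStep P l P' → (∀ v, l ≠ .inp c v ∧ l ≠ .out c v) →
            UStep (.res P c) l (.res P' c)
  | unfold : UStep (Proc.unfold P) l Q → UStep (.fix P) l Q

inductive TStep : Proc → Proc → Prop where
  | nil          : TStep .nil .nil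
  | delay        : TStep (.tick P) P
  | timeoutOut   : TStep (.out c v P Q) Q
  | timeoutInp   : TStep (.inp c f Q) Q
  | timeoutRead  : TStep (.read s f Q) Q
  | timeoutWrite : TStep (.write a v P Q) Q
  | timePar      : TStep P P' → TStep Q Q' → (∀ R, ¬ UStep (.par P Q) .tau R) →
                   TStep (.par P Q) (.par P' Q')
  | res          : TStep P P' → TStep (.res P c) (.res P' c)
  | unfold       : TStep (Proc.unfold P) Q → TStep (.fix P) Q

/-- The process LTS. -/
def Step (P : Proc) (l : Label) (Q : Proc) : Prop :=
  match l with
  | .tick => TStep P Q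
  | _ => UStep P l Q

/-! ## Structural congruence: the least congruence containing commutativity and
associativity of parallel composition, with nil as neutral element. -/

inductive SC : Proc → Proc → Prop where
  | refl      : SC P P
  | symm      : SC P Q → SC Q P
  | trans     : SC P Q → SC Q R → SC P R
  | parComm   : SC (.par P Q) (.par Q P)
  | parAssoc  : SC (.par (.par P Q) R) (.par P (.par Q R))
  | parNil    : SC (.par P .nil) P
  | tickCong  : SC P P' → SC (.tick P) (.tick P')
  | parCong   : SC P P' → SC Q Q' → SC (.par P Q) (.par P' Q')
  | outCong   : SC P P' → SC Q Q' → SC (.out c v P Q) (.out c v P' Q')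
  | inpCong   : (∀ v, SC (f v) (g v)) → SC Q Q' → SC (.inp c f Q) (.inp c g Q')
  | readCong  : (∀ v, SC (f v) (g v)) → SC Q Q' → SC (.read s f Q) (.read s g Q')
  | writeCong : SC P P' → SC Q Q' → SC (.write a v P Q) (.write a v P' Q')
  | resCong   : SC P P' → SC (.res P c) (.res P' c)
  | fixCong   : SC P P' → SC (.fix P) (.fix P')

/-! ## Static predicates on processes -/

/-- All free process variables are < d. -/
inductive ClosedAbove : ℕ → Proc → Prop where
  | nil   : ClosedAbove d .nil
  | pvar  : m < d → ClosedAbove d (.pvar m)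
  | tick  : ClosedAbove d P → ClosedAbove d (.tick P)
  | par   : ClosedAbove d P → ClosedAbove d Q → ClosedAbove d (.par P Q)
  | out   : ClosedAbove d P → ClosedAbove d Q → ClosedAbove d (.out c v P Q)
  | inp   : (∀ v, ClosedAbove d (f v)) → ClosedAbove d Q → ClosedAbove d (.inp c f Q)
  | read  : (∀ v, ClosedAbove d (f v)) → ClosedAbove d Q → ClosedAbove d (.read s f Q)
  | write : ClosedAbove d P → ClosedAbove d Q → ClosedAbove d (.write a v P Q)
  | res   : ClosedAbove d P → ClosedAbove d (.res P c)
  | fix   : ClosedAbove (d+1) P → ClosedAbove d (.fix P)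

/-- A closed process: no free process variables. -/
def Proc.Closed (P : Proc) : Prop := ClosedAbove 0 P

/-- `TG n P`: process variable `n` occurs only time-guarded in `P`
(occurrences under `tick.-` or in the timeout continuation `Q` of `⌊π.P⌋Q`
are time-guarded). -/
inductive TG : ℕ → Proc → Prop where
  | nil   : TG n .nil
  | pvar  : m ≠ n → TG n (.pvar m)
  | tick  : TG n (.tick P)
  | par   : TG n P → TG n Q → TG n (.par P Q)
  | out   : TG n P → TG n (.out c v P Q)
  | inp   : (∀ v, TG n (f v)) → TG n (.inp c f Q)
  | read  : (∀ v, TG n (f v)) → TG n (.read s f Q)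
  | write : TG n P → TG n (.write a v P Q)
  | res   : TG n P → TG n (.res P c)
  | fix   : TG (n+1) P → TG n (.fix P)

/-- Well-formed processes: in every recursion `fix X.P` all occurrences of `X`
in `P` are time-guarded. -/
inductive WF : Proc → Prop where
  | nil   : WF .nil
  | pvar  : WF (.pvar m)
  | tick  : WF P → WF (.tick P)
  | par   : WF P → WF Q → WF (.par P Q)
  | out   : WF P → WF Q → WF (.out c v P Q)
  | inp   : (∀ v, WF (f v)) → WF Q → WF (.inp c f Q)
  | read  : (∀ v, WF (f v)) → WF Q → WF (.read s f Q)
  | write : WF P → WF Q → WF (.write a v P Q)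
  | res   : WF P → WF (.res P c)
  | fix   : TG 0 P → WF P → WF (.fix P)

/-- Non-interfering process: it never reads sensors nor writes actuators. -/
inductive NonInterfering : Proc → Prop where
  | nil  : NonInterfering .nil
  | pvar : NonInterfering (.pvar m)
  | tick : NonInterfering P → NonInterfering (.tick P)
  | par  : NonInterfering P → NonInterfering Q → NonInterfering (.par P Q)
  | out  : NonInterfering P → NonInterfering Q → NonInterfering (.out c v P Q)
  | inp  : (∀ v, NonInterfering (f v)) → NonInterfering Q → NonInterfering (.inp c f Q)
  | res  : NonInterfering P → NonInterfering (.res P c)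
  | fix  : NonInterfering P → NonInterfering (.fix P)

/-- `DevOK A S P`: every actuator mentioned in `P` is in `A` and every sensor
mentioned in `P` is in `S`. -/
inductive DevOK (A S : Finset ℕ) : Proc → Prop where
  | nil   : DevOK A S .nil
  | pvar  : DevOK A S (.pvar m)
  | tick  : DevOK A S P → DevOK A S (.tick P)
  | par   : DevOK A S P → DevOK A S Q → DevOK A S (.par P Q)
  | out   : DevOK A S P → DevOK A S Q → DevOK A S (.out c v P Q)
  | inp   : (∀ v, DevOK A S (f v)) → DevOK A S Q → DevOK A S (.inp c f Q)
  | read  : s ∈ S → (∀ v, DevOK A S (f v)) → DevOK A S Q → DevOK A S (.read s f Q)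
  | write : a ∈ A → DevOK A S P → DevOK A S Q → DevOK A S (.write a v P Q)
  | res   : DevOK A S P → DevOK A S (.res P c)
  | fix   : DevOK A S P → DevOK A S (.fix P)

/-! ## Physical environments -/

structure Env where
  X : Finset ℕ                       -- state variables
  A : Finset ℕ                       -- actuators
  S : Finset ℕ                       -- sensors
  xi_x : {n // n ∈ X} → ℝ            -- state function
  xi_u : {n // n ∈ A} → ℝ            -- actuator function
  xi_w : {n // n ∈ X} → ℝ            -- uncertainty function
  evol : ({n // n ∈ X} → ℝ) → ({n // n ∈ A} → ℝ) → ({n // n ∈ X} → ℝ) →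
         Set ({n // n ∈ X} → ℝ)      -- evolution map
  xi_e : {n // n ∈ S} → ℝ            -- sensor-error function
  meas : ({n // n ∈ X} → ℝ) → ({n // n ∈ S} → ℝ) →
         Set ({n // n ∈ S} → ℝ)      -- measurement map
  inv  : ({n // n ∈ X} → ℝ) → Prop   -- invariant function

/-- Possible measurements of sensor `s` in `E`. -/
def readSensor (E : Env) (s : ℕ) : Set ℝ :=
  { r | ∃ h : s ∈ E.S, ∃ ξ ∈ E.meas E.xi_x E.xi_e, r = ξ ⟨s, h⟩ }

/-- Update the value of actuator `a` to `v`. -/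
def updateAct (E : Env) (a : ℕ) (v : ℝ) : Env :=
  { E with xi_u := fun b => if (b : ℕ) = a then v else E.xi_u b }

/-- The set of next admissible environments. -/
def nextEnv (E : Env) : Set Env :=
  { E' | ∃ ξ ∈ E.evol E.xi_x E.xi_u E.xi_w, E' = { E with xi_x := ξ } }

/-- The invariant of `E`, evaluated at the current state. -/
def invHolds (E : Env) : Prop := E.inv E.xi_x

/-! ## Disjoint union of environments -/

/-- Glue two functions defined on finite sets into one on the union
(well defined on disjoint sets). -/
def glue {X1 X2 : Finset ℕ} (f : {n // n ∈ X1} → ℝ) (g : {n // n ∈ X2} → ℝ) :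
    {n // n ∈ X1 ∪ X2} → ℝ :=
  fun x => if h : (x : ℕ) ∈ X1 then f ⟨x, h⟩
           else g ⟨x, (Finset.mem_union.mp x.2).resolve_left h⟩

/-- Restriction of a function on a union to the left component. -/
def restrL {X1 X2 : Finset ℕ} (f : {n // n ∈ X1 ∪ X2} → ℝ) : {n // n ∈ X1} → ℝ :=
  fun x => f ⟨x, Finset.mem_union_left _ x.2⟩

/-- Restriction of a function on a union to the right component. -/
def restrR {X1 X2 : Finset ℕ} (f : {n // n ∈ X1 ∪ X2} → ℝ) : {n // n ∈ X2} → ℝ :=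
  fun x => f ⟨x, Finset.mem_union_right _ x.2⟩

/-- Disjointness of the name sets of two environments. -/
def EnvDisj (E1 E2 : Env) : Prop :=
  Disjoint E1.X E2.X ∧ Disjoint E1.A E2.A ∧ Disjoint E1.S E2.S

/-- Disjoint union `E1 ⊎ E2` of two environments. -/
def Env.disjUnion (E1 E2 : Env) : Env where
  X := E1.X ∪ E2.X
  A := E1.A ∪ E2.A
  S := E1.S ∪ E2.S
  xi_x := glue E1.xi_x E2.xi_x
  xi_u := glue E1.xi_u E2.xi_u
  xi_w := glue E1.xi_w E2.xi_w
  evol := fun ξ ψ φ =>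
    { ξ' | ∃ ξ1 ∈ E1.evol (restrL ξ) (restrL ψ) (restrL φ),
           ∃ ξ2 ∈ E2.evol (restrR ξ) (restrR ψ) (restrR φ), ξ' = glue ξ1 ξ2 }
  xi_e := glue E1.xi_e E2.xi_e
  meas := fun ξ η =>
    { m | ∃ m1 ∈ E1.meas (restrL ξ) (restrL η),
          ∃ m2 ∈ E2.meas (restrR ξ) (restrR η), m = glue m1 m2 }
  inv := fun ξ => E1.inv (restrL ξ) ∧ E2.inv (restrR ξ)

/-! ## Cyber-physical systems -/

structure CPS where
  env  : Env
  proc : Proc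

/-- Well-formed CPS: closed, time-guarded process mentioning only devices of
its environment. -/
def CPS.WellFormed (M : CPS) : Prop :=
  M.proc.Closed ∧ WF M.proc ∧ DevOK M.env.A M.env.S M.proc

/-- Disjoint union of (non-interfering) CPSs. -/
def CPS.disjUnion (M O : CPS) : CPS :=
  ⟨M.env.disjUnion O.env, .par M.proc O.proc⟩

/-- Untimed CPS transitions (rules Out, Inp, SensRead, ActWrite, Tau). -/
inductive CStepU : CPS → Label → CPS → Prop where
  | out : UStep P (.out c v) P' → invHolds E →
          CStepU ⟨E, P⟩ (.out c v) ⟨E, P'⟩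
  | inp : UStep P (.inp c v) P' → invHolds E →
          CStepU ⟨E, P⟩ (.inp c v) ⟨E, P'⟩
  | sensRead : UStep P (.read s v) P' → invHolds E → v ∈ readSensor E s →
          CStepU ⟨E, P⟩ .tau ⟨E, P'⟩
  | actWrite : UStep P (.write a v) P' → invHolds E →
          CStepU ⟨E, P⟩ .tau ⟨updateAct E a v, P'⟩
  | tau : UStep P .tau P' → invHolds E →
          CStepU ⟨E, P⟩ .tau ⟨E, P'⟩

/-- The CPS LTS (rule Time for tick, `CStepU` otherwise). -/
def CStep (M : CPS) (α : Label) (N : CPS) : Prop :=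
  match α with
  | .tick => TStep M.proc N.proc ∧ (∀ N', ¬ CStepU M .tau N') ∧
             invHolds M.env ∧ N.env ∈ nextEnv M.env
  | _ => CStepU M α N

/-! ## Weak transitions and bisimulation -/

def TauStep (M N : CPS) : Prop := CStep M .tau N

/-- `M ⇒ N`. -/
def WeakTau : CPS → CPS → Prop := Relation.ReflTransGen TauStep

/-- `M ⇒α⇒ N`. -/
def WeakStep (M : CPS) (α : Label) (N : CPS) : Prop :=
  ∃ M₁ M₂, WeakTau M M₁ ∧ CStep M₁ α M₂ ∧ WeakTau M₂ N

/-- `M ⇒α̂⇒ N`. -/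
def WeakHat (M : CPS) (α : Label) (N : CPS) : Prop :=
  match α with
  | .tau => WeakTau M N
  | _ => WeakStep M α N

def IsBisimulation (R : CPS → CPS → Prop) : Prop :=
  (∀ {M N}, R M N → R N M) ∧
  (∀ {M N α M'}, R M N → CStep M α M' → ∃ N', WeakHat N α N' ∧ R M' N')

/-- Weak bisimilarity `M ≈ N`. -/
def Bisim (M N : CPS) : Prop := ∃ R, IsBisimulation R ∧ R M N

/-! ## Traces -/

/-- Reachability in the CPS LTS. -/
def Reach : CPS → CPS → Prop :=
  Relation.ReflTransGen (fun M N => ∃ α, CStep M α N)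

def UntimedStep (M N : CPS) : Prop := ∃ α, α ≠ Label.tick ∧ CStep M α N

def UntimedReach : CPS → CPS → Prop := Relation.ReflTransGen UntimedStep

/-- One time slot: some untimed activity followed by a tick. -/
def SlotStep (M N : CPS) : Prop := ∃ M', UntimedReach M M' ∧ CStep M' .tick N

/-! ## Derived process notation -/

/-- Persistent prefix `π.P := fix X.⌊π.P⌋X` (output). -/
def prefOut (c : Chan) (v : Val) (P : Proc) : Proc :=
  .fix (.out c v (Proc.lift 0 P) (.pvar 0))

/-- Persistent prefix (actuator write). -/
def prefWrite (a : ActName) (v : Val) (P : Proc) : Proc :=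
  .fix (.write a v (Proc.lift 0 P) (.pvar 0))

/-- Persistent prefix (sensor read). -/
def prefRead (s : SensName) (f : Val → Proc) : Proc :=
  .fix (.read s (fun v => Proc.lift 0 (f v)) (.pvar 0))

/-- `tick^k.P`. -/
def Proc.ticks : ℕ → Proc → Proc
  | 0, P => P
  | n+1, P => .tick (Proc.ticks n P)

/-! ## The engine case study -/

noncomputable section
open Classical

def engDelta : ℝ := 0.4   -- uncertainty δ
def engEps : ℝ := 0.1     -- sensor error ε

/-- Value written on the actuator `cool` to turn the cooling on
(the actuator is on iff its value is negative). -/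
def valOn : Val := -1
/-- Value written on the actuator `cool` to turn the cooling off. -/
def valOff : Val := 1

def IsOn (u : ℝ) : Prop := u < 0
def IsOff (u : ℝ) : Prop := 0 ≤ u

/-- `heat(ξu, cool)`: `-coolRate` if the cooling is active, `+1` otherwise. -/
def engHeat (coolRate : ℝ) (u : ℝ) : ℝ := if u < 0 then -coolRate else 1

def warningCh : Chan := 0
def alarmCh : Chan := 1
def failureCh : Chan := 2

/-- The physical environment of the engine, with cooling power `coolRate`,
state variable `x` (temperature), actuator `a` (cool) and sensor `s`. -/
def EngEnvN (coolRate : ℝ) (x a s : ℕ) : Env where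
  X := {x}
  A := {a}
  S := {s}
  xi_x := fun _ => 0
  xi_u := fun _ => valOff
  xi_w := fun _ => engDelta
  evol := fun ξ ψ _ =>
    { ξ' | ∃ γ ∈ Set.Icc (-engDelta) engDelta,
           ∀ y u, ξ' y = ξ y + engHeat coolRate (ψ u) + γ }
  xi_e := fun _ => engEps
  meas := fun ξ _ =>
    { m | ∀ t y, m t ∈ Set.Icc (ξ y - engEps) (ξ y + engEps) }
  inv := fun ξ => ∀ y, 0 ≤ ξ y ∧ ξ y ≤ 30

/-- The controller of the engine with identifier `ID`, actuator `a` and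
sensor `s`:
`Ctrl = fix X. s?(x). if x > 10 then Cooling else tick.X` with
`Cooling = a!⟨on⟩.fix Y.tick⁵.s?(x). if x > 10 then w̄arning⟨ID⟩.Y else a!⟨off⟩.tick.X`. -/
def CtrlN (ID : Val) (a s : ℕ) : Proc :=
  .fix (prefRead s (fun x =>
    if 10 < x then
      prefWrite a valOn (.fix (Proc.ticks 5 (prefRead s (fun y =>
        if 10 < y then prefOut warningCh ID (.pvar 0)
        else prefWrite a valOff (.tick (.pvar 1))))))
    else .tick (.pvar 0)))

/-- The engine with cooling power `coolRate`. -/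
def EngGen (coolRate : ℝ) : CPS := ⟨EngEnvN coolRate 0 0 0, CtrlN 0 0 0⟩

/-- The engine `Eng`. -/
def Eng : CPS := EngGen 1
/-- The variant engine `Enḡ` (heat = −0.8 when cooling). -/
def EngBar : CPS := EngGen 0.8
/-- The variant engine `Enĝ` (heat = −0.7 when cooling). -/
def EngHat : CPS := EngGen 0.7

/-- Current temperature of an engine-like CPS (state variable named 0). -/
def CPS.temp (M : CPS) : ℝ :=
  if h : (0 : ℕ) ∈ M.env.X then M.env.xi_x ⟨0, h⟩ else 0

/-- Current value of the `cool` actuator of an engine-like CPS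
(actuator named 0). -/
def CPS.cool (M : CPS) : ℝ :=
  if h : (0 : ℕ) ∈ M.env.A then M.env.xi_u ⟨0, h⟩ else 0

/-! ## The airplane case study -/

def idL : Val := 0
def idR : Val := 1

/-- `CheckAux id m` is `Check^id_(5-m)`; the free process variable 0 is the
recursion variable `X` of `Check`. -/
def CheckAux (id : Val) : ℕ → Proc
  | 0 => .inp warningCh (fun z =>
           if z ≠ id then prefOut alarmCh 0 (.tick (.pvar 0))
           else prefOut failureCh id (.tick (.pvar 0)))
         (prefOut failureCh id (.pvar 0))
  | m+1 => .inp warningCh (fun y =>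
           if y ≠ id then prefOut alarmCh 0 (.tick (.pvar 0))
           else .tick (CheckAux id m))
         (CheckAux id m)

/-- The monitoring process `Check`. -/
def Check : Proc :=
  .fix (.inp warningCh
    (fun x => if x = idL then CheckAux idL 4 else CheckAux idR 4)
    (.pvar 0))

/-- The left engine (identifier L, devices named 0). -/
def EngL (coolRate : ℝ) : CPS := ⟨EngEnvN coolRate 0 0 0, CtrlN idL 0 0⟩
/-- The right engine (identifier R, devices named 1). -/
def EngR (coolRate : ℝ) : CPS := ⟨EngEnvN coolRate 1 1 1, CtrlN idR 1 1⟩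

/-- `Airplane(r) = ((Eng_L ⊎ Eng_R) ‖ Check)∖warning` with cooling power r. -/
def AirplaneGen (coolRate : ℝ) : CPS :=
  ⟨(EngEnvN coolRate 0 0 0).disjUnion (EngEnvN coolRate 1 1 1),
   .res (.par (.par (CtrlN idL 0 0) (CtrlN idR 1 1)) Check) warningCh⟩

def Airplane : CPS := AirplaneGen 1
def AirplaneBar : CPS := AirplaneGen 0.8

end


/-! ## Auxiliary development for the safety proof -/

section SafetyAux

theorem subst_lift (P : Proc) (n : ℕ) (R : Proc) :
    Proc.subst (Proc.lift n P) n R = P := by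
  induction P generalizing n R with
  | nil => rfl
  | pvar m =>
    by_cases h : m < n
    · simp only [Proc.lift, if_pos h, Proc.subst]
      rw [if_neg (by omega), if_neg (by omega)]
    · simp only [Proc.lift, if_neg h, Proc.subst]
      rw [if_neg (by omega), if_pos (by omega)]
      simp
  | tick P ih => simp [Proc.lift, Proc.subst, ih]
  | par P Q ihP ihQ => simp [Proc.lift, Proc.subst, ihP, ihQ]
  | out c v P Q ihP ihQ => simp [Proc.lift, Proc.subst, ihP, ihQ]
  | inp c f Q ihf ihQ => simp [Proc.lift, Proc.subst, ihf, ihQ]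
  | read s f Q ihf ihQ => simp [Proc.lift, Proc.subst, ihf, ihQ]
  | write a v P Q ihP ihQ => simp [Proc.lift, Proc.subst, ihP, ihQ]
  | res P c ih => simp [Proc.lift, Proc.subst, ih]
  | fix P ih => simp [Proc.lift, Proc.subst, ih]

theorem lift_lift (P : Proc) (c c' : ℕ) (h : c' ≤ c) :
    Proc.lift c' (Proc.lift c P) = Proc.lift (c+1) (Proc.lift c' P) := by
  induction P generalizing c c' with
  | nil => rfl
  | pvar m =>
    by_cases h1 : m < c'
    · simp only [Proc.lift, if_pos h1, if_pos (show m < c by omega),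
        if_pos (show m < c + 1 by omega)]
    · by_cases h2 : m < c
      · simp only [Proc.lift, if_pos h2, if_neg h1,
          if_pos (show m + 1 < c + 1 by omega)]
      · simp only [Proc.lift, if_neg h2, if_neg h1,
          if_neg (show ¬ m + 1 < c' by omega),
          if_neg (show ¬ m + 1 < c + 1 by omega)]
  | tick P ih => simp [Proc.lift, ih _ _ h]
  | par P Q ihP ihQ => simp [Proc.lift, ihP _ _ h, ihQ _ _ h]
  | out c v P Q ihP ihQ => simp [Proc.lift, ihP _ _ h, ihQ _ _ h]
  | inp ch f Q ihf ihQ => simp [Proc.lift]; exact ⟨funext fun v => ihf v _ _ h, ihQ _ _ h⟩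
  | read s f Q ihf ihQ => simp [Proc.lift]; exact ⟨funext fun v => ihf v _ _ h, ihQ _ _ h⟩
  | write a v P Q ihP ihQ => simp [Proc.lift, ihP _ _ h, ihQ _ _ h]
  | res P ch ih => simp [Proc.lift, ih _ _ h]
  | fix P ih => simp [Proc.lift, ih _ _ (by omega : c'+1 ≤ c+1)]

theorem subst_lift_comm (P : Proc) (c n : ℕ) (R : Proc) (h : c ≤ n) :
    Proc.subst (Proc.lift c P) (n+1) (Proc.lift c R) =
      Proc.lift c (Proc.subst P n R) := by
  induction P generalizing c n R with
  | nil => rfl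
  | pvar m =>
    by_cases h1 : m < c
    · simp only [Proc.lift, if_pos h1, Proc.subst]
      rw [if_neg (by omega), if_neg (by omega), if_neg (by omega),
        if_neg (by omega), Proc.lift, if_pos h1]
    · simp only [Proc.lift, if_neg h1, Proc.subst]
      by_cases h2 : m = n
      · rw [if_pos (by omega), if_pos h2]
      · rw [if_neg (by omega)]
        by_cases h3 : n < m
        · rw [if_pos (by omega), if_neg h2, if_pos h3, Proc.lift,
            if_neg (by omega)]
          congr 1; omega
        · rw [if_neg (by omega), if_neg h2, if_neg h3, Proc.lift, if_neg h1]
  | tick P ih => simp [Proc.lift, Proc.subst, ih _ _ _ h]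
  | par P Q ihP ihQ => simp [Proc.lift, Proc.subst, ihP _ _ _ h, ihQ _ _ _ h]
  | out c v P Q ihP ihQ => simp [Proc.lift, Proc.subst, ihP _ _ _ h, ihQ _ _ _ h]
  | inp ch f Q ihf ihQ =>
    simp [Proc.lift, Proc.subst]
    exact ⟨funext fun v => ihf v _ _ _ h, ihQ _ _ _ h⟩
  | read s f Q ihf ihQ =>
    simp [Proc.lift, Proc.subst]
    exact ⟨funext fun v => ihf v _ _ _ h, ihQ _ _ _ h⟩
  | write a v P Q ihP ihQ => simp [Proc.lift, Proc.subst, ihP _ _ _ h, ihQ _ _ _ h]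
  | res P ch ih => simp [Proc.lift, Proc.subst, ih _ _ _ h]
  | fix P ih =>
    simp only [Proc.lift, Proc.subst, Proc.fix.injEq]
    rw [lift_lift R c 0 (by omega)]
    exact ih _ _ _ (by omega)

theorem subst_lift_comm0 (P : Proc) (n : ℕ) (R : Proc) :
    Proc.subst (Proc.lift 0 P) (n+1) (Proc.lift 0 R) =
      Proc.lift 0 (Proc.subst P n R) :=
  subst_lift_comm P 0 n R (Nat.zero_le n)

theorem lift_closed {c : ℕ} {P : Proc} (h : ClosedAbove c P) :
    Proc.lift c P = P := by
  induction h with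
  | nil => rfl
  | pvar h => simp [Proc.lift, h]
  | tick _ ih => simp [Proc.lift, ih]
  | par _ _ ih1 ih2 => simp [Proc.lift, ih1, ih2]
  | out _ _ ih1 ih2 => simp [Proc.lift, ih1, ih2]
  | inp _ _ ihf ihQ => simp [Proc.lift]; exact ⟨funext ihf, ihQ⟩
  | read _ _ ihf ihQ => simp [Proc.lift]; exact ⟨funext ihf, ihQ⟩
  | write _ _ ih1 ih2 => simp [Proc.lift, ih1, ih2]
  | res _ ih => simp [Proc.lift, ih]
  | fix _ ih => simp [Proc.lift, ih]

theorem subst_closed {n : ℕ} {P : Proc} (h : ClosedAbove n P) (R : Proc) :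
    Proc.subst P n R = P := by
  induction h generalizing R with
  | nil => rfl
  | pvar h => simp only [Proc.subst]; rw [if_neg (by omega), if_neg (by omega)]
  | tick _ ih => simp [Proc.subst, ih]
  | par _ _ ih1 ih2 => simp [Proc.subst, ih1, ih2]
  | out _ _ ih1 ih2 => simp [Proc.subst, ih1, ih2]
  | inp _ _ ihf ihQ => simp [Proc.subst]; exact ⟨funext fun v => ihf v _, ihQ _⟩
  | read _ _ ihf ihQ => simp [Proc.subst]; exact ⟨funext fun v => ihf v _, ihQ _⟩
  | write _ _ ih1 ih2 => simp [Proc.subst, ih1, ih2]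
  | res _ ih => simp [Proc.subst, ih]
  | fix _ ih => simp [Proc.subst, ih]

theorem closed_lift {d : ℕ} {P : Proc} (h : ClosedAbove d P) (c : ℕ) :
    ClosedAbove (d+1) (Proc.lift c P) := by
  induction h generalizing c with
  | nil => exact .nil
  | pvar h =>
    simp only [Proc.lift]
    split <;> exact .pvar (by omega)
  | tick _ ih => exact .tick (ih c)
  | par _ _ ih1 ih2 => exact .par (ih1 c) (ih2 c)
  | out _ _ ih1 ih2 => exact .out (ih1 c) (ih2 c)
  | inp _ _ ihf ihQ => exact .inp (fun v => ihf v c) (ihQ c)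
  | read _ _ ihf ihQ => exact .read (fun v => ihf v c) (ihQ c)
  | write _ _ ih1 ih2 => exact .write (ih1 c) (ih2 c)
  | res _ ih => exact .res (ih c)
  | fix _ ih => exact .fix (ih (c+1))

/-! ### Easy `subst` computations for the derived prefixes -/

theorem subst_pvar0 (n : ℕ) (R : Proc) :
    Proc.subst (.pvar 0) (n+1) R = .pvar 0 := by
  simp only [Proc.subst]
  rw [if_neg (by omega), if_neg (by omega)]

theorem subst_pvar_self (n : ℕ) (R : Proc) :
    Proc.subst (.pvar n) n R = R := by
  simp only [Proc.subst]
  simp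

theorem subst_pvar_lt {m n : ℕ} (h : m < n) (R : Proc) :
    Proc.subst (.pvar m) n R = .pvar m := by
  simp only [Proc.subst]
  rw [if_neg (by omega), if_neg (by omega)]

theorem subst_tick (P : Proc) (n : ℕ) (R : Proc) :
    Proc.subst (.tick P) n R = .tick (Proc.subst P n R) := rfl

theorem subst_prefRead (s : SensName) (f : Val → Proc) (n : ℕ) (R : Proc) :
    Proc.subst (prefRead s f) n R = prefRead s (fun v => Proc.subst (f v) n R) := by
  simp only [prefRead, Proc.subst, subst_lift_comm0]
  rw [if_neg (show ¬((0:ℕ) = n+1) by omega), if_neg (show ¬(n+1 < 0) by omega)]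

theorem subst_prefWrite (a : ActName) (w : Val) (P : Proc) (n : ℕ) (R : Proc) :
    Proc.subst (prefWrite a w P) n R = prefWrite a w (Proc.subst P n R) := by
  simp only [prefWrite, Proc.subst, subst_lift_comm0]
  rw [if_neg (show ¬((0:ℕ) = n+1) by omega), if_neg (show ¬(n+1 < 0) by omega)]

theorem subst_prefOut (c : Chan) (w : Val) (P : Proc) (n : ℕ) (R : Proc) :
    Proc.subst (prefOut c w P) n R = prefOut c w (Proc.subst P n R) := by
  simp only [prefOut, Proc.subst, subst_lift_comm0]
  rw [if_neg (show ¬((0:ℕ) = n+1) by omega), if_neg (show ¬(n+1 < 0) by omega)]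

theorem subst_ticks (k : ℕ) (P : Proc) (n : ℕ) (R : Proc) :
    Proc.subst (Proc.ticks k P) n R = Proc.ticks k (Proc.subst P n R) := by
  induction k with
  | zero => rfl
  | succ k ih => simp [Proc.ticks, Proc.subst, ih]

/-! ### Unfolding the derived prefixes -/

theorem unfold_read (s : SensName) (f : Val → Proc) :
    Proc.unfold (.read s (fun v => Proc.lift 0 (f v)) (.pvar 0)) =
      .read s f (prefRead s f) := by
  simp only [Proc.unfold, Proc.subst, subst_lift, prefRead]
  simp

theorem unfold_write (a : ActName) (w : Val) (P : Proc) :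
    Proc.unfold (.write a w (Proc.lift 0 P) (.pvar 0)) =
      .write a w P (prefWrite a w P) := by
  simp only [Proc.unfold, Proc.subst, subst_lift, prefWrite]
  simp

theorem unfold_out (c : Chan) (w : Val) (P : Proc) :
    Proc.unfold (.out c w (Proc.lift 0 P) (.pvar 0)) =
      .out c w P (prefOut c w P) := by
  simp only [Proc.unfold, Proc.subst, subst_lift, prefOut]
  simp

/-! ### The concrete control states of the engine -/

noncomputable section
open Classical

/-- The inner function of the controller loop (before substitution). -/
def gsmall : Val → Proc := fun y =>
  if 10 < y then prefOut warningCh 0 (.pvar 0)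
  else prefWrite 0 valOff (.tick (.pvar 1))

/-- The outer function of the controller (before substitution). -/
def fbig : Val → Proc := fun x =>
  if 10 < x then prefWrite 0 valOn (.fix (Proc.ticks 5 (prefRead 0 gsmall)))
  else .tick (.pvar 0)

/-- The controller itself. -/
def P1 : Proc := .fix (prefRead 0 fbig)

theorem Ctrl_eq : CtrlN 0 0 0 = P1 := rfl

def G1 : Val → Proc := fun y =>
  if 10 < y then prefOut warningCh 0 (.pvar 0)
  else prefWrite 0 valOff (.tick P1)

/-- The cooling loop with the outer recursion already resolved. -/
def Kc : Proc := .fix (Proc.ticks 5 (prefRead 0 G1))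

def Fc : Val → Proc := fun v =>
  if 10 < v then prefWrite 0 valOn Kc else .tick P1

def G2 : Val → Proc := fun y =>
  if 10 < y then prefOut warningCh 0 Kc
  else prefWrite 0 valOff (.tick P1)

/-- `T k = tick^k . read`. -/
def T (k : ℕ) : Proc := Proc.ticks k (prefRead 0 G2)

/-! ### Closedness -/

theorem closed_ticks {d k : ℕ} {P : Proc} (h : ClosedAbove d P) :
    ClosedAbove d (Proc.ticks k P) := by
  induction k with
  | zero => exact h
  | succ k ih => exact .tick ih

theorem closed_prefRead {d : ℕ} {s : SensName} {f : Val → Proc}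
    (h : ∀ v, ClosedAbove d (f v)) : ClosedAbove d (prefRead s f) :=
  .fix (.read (fun v => closed_lift (h v) 0) (.pvar (by omega)))

theorem closed_prefWrite {d : ℕ} {a : ActName} {w : Val} {P : Proc}
    (h : ClosedAbove d P) : ClosedAbove d (prefWrite a w P) :=
  .fix (.write (closed_lift h 0) (.pvar (by omega)))

theorem closed_prefOut {d : ℕ} {c : Chan} {w : Val} {P : Proc}
    (h : ClosedAbove d P) : ClosedAbove d (prefOut c w P) :=
  .fix (.out (closed_lift h 0) (.pvar (by omega)))

theorem closed_P1 : ClosedAbove 0 P1 := by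
  refine .fix (closed_prefRead fun v => ?_)
  unfold fbig
  split
  · refine closed_prefWrite (.fix (closed_ticks (closed_prefRead fun y => ?_)))
    unfold gsmall
    split
    · exact closed_prefOut (.pvar (by omega))
    · exact closed_prefWrite (.tick (.pvar (by omega)))
  · exact .tick (.pvar (by omega))

/-! ### Unfolding the controller -/

theorem unfold_P1body :
    Proc.unfold (prefRead 0 fbig) = prefRead 0 Fc := by
  show Proc.subst (prefRead 0 fbig) 0 P1 = prefRead 0 Fc
  rw [subst_prefRead]
  have hg : (fun y => Proc.subst (gsmall y) 1 P1) = G1 := by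
    funext y
    unfold gsmall G1
    by_cases hy : 10 < y
    · rw [if_pos hy, if_pos hy, subst_prefOut, subst_pvar_lt (by omega)]
    · rw [if_neg hy, if_neg hy, subst_prefWrite, subst_tick, subst_pvar_self]
  have hf : (fun v => Proc.subst (fbig v) 0 P1) = Fc := by
    funext v
    unfold fbig Fc
    by_cases h : 10 < v
    · rw [if_pos h, if_pos h]
      show Proc.subst
        (prefWrite 0 valOn (.fix (Proc.ticks 5 (prefRead 0 gsmall)))) 0 P1 =
        prefWrite 0 valOn Kc
      rw [subst_prefWrite]
      show prefWrite 0 valOn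
        (.fix (Proc.subst (Proc.ticks 5 (prefRead 0 gsmall)) 1
          (Proc.lift 0 P1))) = prefWrite 0 valOn Kc
      rw [lift_closed closed_P1, subst_ticks, subst_prefRead, hg]
      rfl
    · rw [if_neg h, if_neg h, subst_tick, subst_pvar_self]
  rw [hf]

theorem unfold_Kbody :
    Proc.unfold (Proc.ticks 5 (prefRead 0 G1)) = .tick (T 4) := by
  show Proc.subst (Proc.ticks 5 (prefRead 0 G1)) 0 Kc = .tick (T 4)
  rw [subst_ticks, subst_prefRead]
  have hg : (fun y => Proc.subst (G1 y) 0 Kc) = G2 := by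
    funext y
    unfold G1 G2
    by_cases hy : 10 < y
    · rw [if_pos hy, if_pos hy, subst_prefOut, subst_pvar_self]
    · rw [if_neg hy, if_neg hy, subst_prefWrite,
        subst_closed (.tick closed_P1) Kc]
  rw [hg]
  rfl

/-! ### Inversion and introduction lemmas for the process LTS -/

theorem ustep_tick {P : Proc} {l : Label} {Q : Proc}
    (h : UStep (.tick P) l Q) : False := by cases h

theorem ustep_prefRead {s : SensName} {f : Val → Proc} {l : Label} {Q : Proc}
    (h : UStep (prefRead s f) l Q) : ∃ v, l = .read s v ∧ Q = f v := by
  cases h with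
  | unfold h =>
    rw [unfold_read] at h
    cases h
    exact ⟨_, rfl, rfl⟩

theorem ustep_prefWrite {a : ActName} {w : Val} {P : Proc} {l : Label} {Q : Proc}
    (h : UStep (prefWrite a w P) l Q) : l = .write a w ∧ Q = P := by
  cases h with
  | unfold h =>
    rw [unfold_write] at h
    cases h
    exact ⟨rfl, rfl⟩

theorem ustep_P1 {l : Label} {Q : Proc} (h : UStep P1 l Q) :
    ∃ v, l = .read 0 v ∧ Q = Fc v := by
  cases h with
  | unfold h =>
    rw [unfold_P1body] at h
    exact ustep_prefRead h

theorem ustep_Kc {l : Label} {Q : Proc} (h : UStep Kc l Q) : False := by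
  cases h with
  | unfold h =>
    rw [unfold_Kbody] at h
    exact ustep_tick h

theorem tstep_tick {P Q : Proc} (h : TStep (.tick P) Q) : Q = P := by
  cases h; rfl

theorem tstep_Kc {Q : Proc} (h : TStep Kc Q) : Q = T 4 := by
  cases h with
  | unfold h =>
    rw [unfold_Kbody] at h
    exact tstep_tick h

theorem ustep_prefRead_intro (s : SensName) (f : Val → Proc) (v : Val) :
    UStep (prefRead s f) (.read s v) (f v) :=
  UStep.unfold (by rw [unfold_read]; exact .read)

theorem ustep_prefWrite_intro {a : ActName} {w : Val} {P : Proc} :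
    UStep (prefWrite a w P) (.write a w) P :=
  UStep.unfold (by rw [unfold_write]; exact .write)

theorem ustep_P1_intro (v : Val) : UStep P1 (.read 0 v) (Fc v) :=
  UStep.unfold (by rw [unfold_P1body]; exact ustep_prefRead_intro 0 Fc v)

theorem tstep_Kc_intro : TStep Kc (T 4) :=
  TStep.unfold (by rw [unfold_Kbody]; exact .delay)

/-! ### The engine environment -/

/-- The engine environment with temperature `t` and actuator value `u`. -/
def mkE (t u : ℝ) : Env :=
  { EngEnvN 1 0 0 0 with xi_x := fun _ => t, xi_u := fun _ => u }

theorem mem01 : (0:ℕ) ∈ ({0} : Finset ℕ) := Finset.mem_singleton_self 0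

theorem engHeat_off {u : ℝ} (h : 0 ≤ u) : engHeat 1 u = 1 := by
  simp [engHeat, not_lt.2 h]

theorem engHeat_on {u : ℝ} (h : u < 0) : engHeat 1 u = -1 := by
  simp [engHeat, h]

theorem invHolds_mkE {t : ℝ} (u : ℝ) (h0 : 0 ≤ t) (h30 : t ≤ 30) :
    invHolds (mkE t u) := fun _ => ⟨h0, h30⟩

theorem readSensor_self (t u : ℝ) : t ∈ readSensor (mkE t u) 0 := by
  refine ⟨mem01, fun _ => t, fun t' y => ?_, rfl⟩
  show t ∈ Set.Icc (t - engEps) (t + engEps)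
  simp only [Set.mem_Icc, engEps]
  norm_num

theorem mem_readSensor {t u v : ℝ} (h : v ∈ readSensor (mkE t u) 0) :
    t - 0.1 ≤ v ∧ v ≤ t + 0.1 := by
  obtain ⟨hs, ξ, hξ, rfl⟩ := h
  have h2 := hξ ⟨0, hs⟩ ⟨0, mem01⟩
  simp only [Set.mem_Icc, engEps] at h2
  exact ⟨h2.1, h2.2⟩

theorem mkE_set_x (t u t' : ℝ) :
    { mkE t u with xi_x := fun _ => t' } = mkE t' u := rfl

theorem updateAct_mkE (t u w : ℝ) : updateAct (mkE t u) 0 w = mkE t w := by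
  unfold updateAct
  have : (fun b : {n // n ∈ (mkE t u).A} =>
      if (b : ℕ) = 0 then w else (mkE t u).xi_u b) = fun _ => w := by
    funext b
    rw [if_pos (Finset.mem_singleton.mp b.2)]
  rw [this]
  rfl

theorem nextEnv_mkE {t u : ℝ} {E' : Env} (h : E' ∈ nextEnv (mkE t u)) :
    ∃ γ, -0.4 ≤ γ ∧ γ ≤ 0.4 ∧ E' = mkE (t + engHeat 1 u + γ) u := by
  obtain ⟨ξ, hξ, rfl⟩ := h
  obtain ⟨γ, hγ, hval⟩ := hξ
  simp only [Set.mem_Icc, engDelta] at hγ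
  refine ⟨γ, hγ.1, hγ.2, ?_⟩
  have hξ' : ξ = fun _ => t + engHeat 1 u + γ :=
    funext fun y => hval y ⟨0, mem01⟩
  rw [hξ', mkE_set_x]

theorem self_mem_nextEnv (t u : ℝ) :
    mkE (t + engHeat 1 u + 0) u ∈ nextEnv (mkE t u) := by
  refine ⟨fun _ => t + engHeat 1 u + 0, ⟨0, ?_, fun y u' => rfl⟩,
    (mkE_set_x t u _).symm⟩
  simp only [Set.mem_Icc, engDelta]
  norm_num

theorem noTau_tick (E : Env) (P : Proc) (N' : CPS) :
    ¬ CStepU ⟨E, .tick P⟩ .tau N' := by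
  intro h
  cases h with
  | sensRead h _ _ => exact ustep_tick h
  | actWrite h _ => exact ustep_tick h
  | tau h _ => exact ustep_tick h

theorem noTau_Kc (E : Env) (N' : CPS) : ¬ CStepU ⟨E, Kc⟩ .tau N' := by
  intro h
  cases h with
  | sensRead h _ _ => exact ustep_Kc h
  | actWrite h _ => exact ustep_Kc h
  | tau h _ => exact ustep_Kc h

/-! ### The invariant -/

inductive StateOK : Proc → ℝ → ℝ → Prop where
  | idle1 {t u : ℝ} : 0 ≤ u → 0 ≤ t → t ≤ 11.5 → StateOK P1 t u
  | idle2 {t u : ℝ} : 0 ≤ u → 0 ≤ t → t ≤ 11.5 → StateOK (prefRead 0 Fc) t u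
  | tickIdle {t u : ℝ} : 0 ≤ u → 0 ≤ t → t ≤ 10.1 → StateOK (.tick P1) t u
  | coolOn {t u : ℝ} : 0 ≤ u → 9.9 ≤ t → t ≤ 11.5 →
      StateOK (prefWrite 0 valOn Kc) t u
  | kc {t u : ℝ} : u < 0 → 9.9 ≤ t → t ≤ 11.5 → StateOK Kc t u
  | t4 {t u : ℝ} : u < 0 → 8.5 ≤ t → t ≤ 10.9 → StateOK (T 4) t u
  | t3 {t u : ℝ} : u < 0 → 7.1 ≤ t → t ≤ 10.3 → StateOK (T 3) t u
  | t2 {t u : ℝ} : u < 0 → 5.7 ≤ t → t ≤ 9.7 → StateOK (T 2) t u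
  | t1 {t u : ℝ} : u < 0 → 4.3 ≤ t → t ≤ 9.1 → StateOK (T 1) t u
  | t0 {t u : ℝ} : u < 0 → 2.9 ≤ t → t ≤ 8.5 → StateOK (T 0) t u
  | coolOff {t u : ℝ} : u < 0 → 2.9 ≤ t → t ≤ 8.5 →
      StateOK (prefWrite 0 valOff (.tick P1)) t u

def Inv (M : CPS) : Prop := ∃ t u, M.env = mkE t u ∧ StateOK M.proc t u

/-! ### Preservation -/

theorem preserve {M N : CPS} {α : Label} (hM : Inv M) (h : CStep M α N) :
    (α = Label.tau ∨ α = Label.tick) ∧ Inv N := by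
  obtain ⟨E, P⟩ := M
  obtain ⟨En, Pn⟩ := N
  obtain ⟨t, u, hE, hS⟩ := hM
  have hE' : E = mkE t u := hE
  subst hE'
  cases α with
  | write a v => cases (show CStepU ⟨mkE t u, P⟩ (.write a v) ⟨En, Pn⟩ from h)
  | read s v => cases (show CStepU ⟨mkE t u, P⟩ (.read s v) ⟨En, Pn⟩ from h)
  | out c v =>
    have h' : CStepU ⟨mkE t u, P⟩ (.out c v) ⟨En, Pn⟩ := h
    cases h' with
    | out hu hinv =>
      cases hS with
      | idle1 _ _ _ => obtain ⟨v', hl, _⟩ := ustep_P1 hu; exact Label.noConfusion hl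
      | idle2 _ _ _ => obtain ⟨v', hl, _⟩ := ustep_prefRead hu; exact Label.noConfusion hl
      | tickIdle _ _ _ => exact (ustep_tick hu).elim
      | coolOn _ _ _ => exact Label.noConfusion (ustep_prefWrite hu).1
      | kc _ _ _ => exact (ustep_Kc hu).elim
      | t4 _ _ _ => exact (ustep_tick hu).elim
      | t3 _ _ _ => exact (ustep_tick hu).elim
      | t2 _ _ _ => exact (ustep_tick hu).elim
      | t1 _ _ _ => exact (ustep_tick hu).elim
      | t0 _ _ _ => obtain ⟨v', hl, _⟩ := ustep_prefRead hu; exact Label.noConfusion hl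
      | coolOff _ _ _ => exact Label.noConfusion (ustep_prefWrite hu).1
  | inp c v =>
    have h' : CStepU ⟨mkE t u, P⟩ (.inp c v) ⟨En, Pn⟩ := h
    cases h' with
    | inp hu hinv =>
      cases hS with
      | idle1 _ _ _ => obtain ⟨v', hl, _⟩ := ustep_P1 hu; exact Label.noConfusion hl
      | idle2 _ _ _ => obtain ⟨v', hl, _⟩ := ustep_prefRead hu; exact Label.noConfusion hl
      | tickIdle _ _ _ => exact (ustep_tick hu).elim
      | coolOn _ _ _ => exact Label.noConfusion (ustep_prefWrite hu).1
      | kc _ _ _ => exact (ustep_Kc hu).elim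
      | t4 _ _ _ => exact (ustep_tick hu).elim
      | t3 _ _ _ => exact (ustep_tick hu).elim
      | t2 _ _ _ => exact (ustep_tick hu).elim
      | t1 _ _ _ => exact (ustep_tick hu).elim
      | t0 _ _ _ => obtain ⟨v', hl, _⟩ := ustep_prefRead hu; exact Label.noConfusion hl
      | coolOff _ _ _ => exact Label.noConfusion (ustep_prefWrite hu).1
  | tau =>
    refine ⟨Or.inl rfl, ?_⟩
    have h' : CStepU ⟨mkE t u, P⟩ .tau ⟨En, Pn⟩ := h
    cases h' with
    | sensRead hu hinv hv =>
      cases hS with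
      | idle1 hu0 ht0 ht1 =>
        obtain ⟨v', hl, hq⟩ := ustep_P1 hu
        injection hl with hls hlv
        rw [hls, hlv] at hv
        subst hq
        obtain ⟨hv1, hv2⟩ := mem_readSensor hv
        refine ⟨t, u, rfl, ?_⟩
        show StateOK (Fc v') t u
        by_cases hc : 10 < v'
        · simp only [Fc]; rw [if_pos hc]
          exact .coolOn hu0 (by linarith) ht1
        · simp only [Fc]; rw [if_neg hc]
          push_neg at hc
          exact .tickIdle hu0 ht0 (by linarith)
      | idle2 hu0 ht0 ht1 =>
        obtain ⟨v', hl, hq⟩ := ustep_prefRead hu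
        injection hl with hls hlv
        rw [hls, hlv] at hv
        subst hq
        obtain ⟨hv1, hv2⟩ := mem_readSensor hv
        refine ⟨t, u, rfl, ?_⟩
        show StateOK (Fc v') t u
        by_cases hc : 10 < v'
        · simp only [Fc]; rw [if_pos hc]
          exact .coolOn hu0 (by linarith) ht1
        · simp only [Fc]; rw [if_neg hc]
          push_neg at hc
          exact .tickIdle hu0 ht0 (by linarith)
      | tickIdle _ _ _ => exact (ustep_tick hu).elim
      | coolOn _ _ _ => exact Label.noConfusion (ustep_prefWrite hu).1
      | kc _ _ _ => exact (ustep_Kc hu).elim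
      | t4 _ _ _ => exact (ustep_tick hu).elim
      | t3 _ _ _ => exact (ustep_tick hu).elim
      | t2 _ _ _ => exact (ustep_tick hu).elim
      | t1 _ _ _ => exact (ustep_tick hu).elim
      | t0 hu0 ht0 ht1 =>
        obtain ⟨v', hl, hq⟩ := ustep_prefRead (s := 0) (f := G2) hu
        injection hl with hls hlv
        rw [hls, hlv] at hv
        subst hq
        obtain ⟨hv1, hv2⟩ := mem_readSensor hv
        refine ⟨t, u, rfl, ?_⟩
        show StateOK (G2 v') t u
        have hc : ¬ 10 < v' := by intro hc; linarith
        simp only [G2]; rw [if_neg hc]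
        exact .coolOff hu0 ht0 ht1
      | coolOff _ _ _ => exact Label.noConfusion (ustep_prefWrite hu).1
    | actWrite hu hinv =>
      cases hS with
      | idle1 _ _ _ => obtain ⟨v', hl, _⟩ := ustep_P1 hu; exact Label.noConfusion hl
      | idle2 _ _ _ => obtain ⟨v', hl, _⟩ := ustep_prefRead hu; exact Label.noConfusion hl
      | tickIdle _ _ _ => exact (ustep_tick hu).elim
      | coolOn hu0 ht0 ht1 =>
        obtain ⟨hl, hq⟩ := ustep_prefWrite hu
        injection hl with hla hlv
        subst hla; subst hlv; subst hq
        exact ⟨t, valOn, updateAct_mkE t u valOn,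
          .kc (by norm_num [valOn]) ht0 ht1⟩
      | kc _ _ _ => exact (ustep_Kc hu).elim
      | t4 _ _ _ => exact (ustep_tick hu).elim
      | t3 _ _ _ => exact (ustep_tick hu).elim
      | t2 _ _ _ => exact (ustep_tick hu).elim
      | t1 _ _ _ => exact (ustep_tick hu).elim
      | t0 _ _ _ => obtain ⟨v', hl, _⟩ := ustep_prefRead hu; exact Label.noConfusion hl
      | coolOff hu0 ht0 ht1 =>
        obtain ⟨hl, hq⟩ := ustep_prefWrite hu
        injection hl with hla hlv
        subst hla; subst hlv; subst hq
        exact ⟨t, valOff, updateAct_mkE t u valOff,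
          .tickIdle (by norm_num [valOff]) (by linarith) (by linarith)⟩
    | tau hu hinv =>
      cases hS with
      | idle1 _ _ _ => obtain ⟨v', hl, _⟩ := ustep_P1 hu; exact Label.noConfusion hl
      | idle2 _ _ _ => obtain ⟨v', hl, _⟩ := ustep_prefRead hu; exact Label.noConfusion hl
      | tickIdle _ _ _ => exact (ustep_tick hu).elim
      | coolOn _ _ _ => exact Label.noConfusion (ustep_prefWrite hu).1
      | kc _ _ _ => exact (ustep_Kc hu).elim
      | t4 _ _ _ => exact (ustep_tick hu).elim
      | t3 _ _ _ => exact (ustep_tick hu).elim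
      | t2 _ _ _ => exact (ustep_tick hu).elim
      | t1 _ _ _ => exact (ustep_tick hu).elim
      | t0 _ _ _ => obtain ⟨v', hl, _⟩ := ustep_prefRead hu; exact Label.noConfusion hl
      | coolOff _ _ _ => exact Label.noConfusion (ustep_prefWrite hu).1
  | tick =>
    obtain ⟨h1, h2, h3, h4⟩ := h
    refine ⟨Or.inr rfl, ?_⟩
    obtain ⟨γ, hγ1, hγ2, hEn⟩ := nextEnv_mkE h4
    cases hS with
    | idle1 hu0 ht0 ht1 =>
      exact ((h2 ⟨mkE t u, Fc t⟩)
        (CStepU.sensRead (ustep_P1_intro t) h3 (readSensor_self t u))).elim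
    | idle2 hu0 ht0 ht1 =>
      exact ((h2 ⟨mkE t u, Fc t⟩)
        (CStepU.sensRead (ustep_prefRead_intro 0 Fc t) h3 (readSensor_self t u))).elim
    | tickIdle hu0 ht0 ht1 =>
      have hp := tstep_tick h1
      have hh : engHeat 1 u = 1 := engHeat_off hu0
      refine ⟨t + engHeat 1 u + γ, u, hEn, ?_⟩
      rw [hp, hh]
      exact .idle1 hu0 (by linarith) (by linarith)
    | coolOn hu0 ht0 ht1 =>
      exact ((h2 ⟨updateAct (mkE t u) 0 valOn, Kc⟩)
        (CStepU.actWrite ustep_prefWrite_intro h3)).elim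
    | kc hu0 ht0 ht1 =>
      have hp := tstep_Kc h1
      have hh : engHeat 1 u = -1 := engHeat_on hu0
      refine ⟨t + engHeat 1 u + γ, u, hEn, ?_⟩
      rw [hp, hh]
      exact .t4 hu0 (by linarith) (by linarith)
    | t4 hu0 ht0 ht1 =>
      have hp := tstep_tick h1
      have hh : engHeat 1 u = -1 := engHeat_on hu0
      refine ⟨t + engHeat 1 u + γ, u, hEn, ?_⟩
      rw [hp, hh]
      exact .t3 hu0 (by linarith) (by linarith)
    | t3 hu0 ht0 ht1 =>
      have hp := tstep_tick h1
      have hh : engHeat 1 u = -1 := engHeat_on hu0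
      refine ⟨t + engHeat 1 u + γ, u, hEn, ?_⟩
      rw [hp, hh]
      exact .t2 hu0 (by linarith) (by linarith)
    | t2 hu0 ht0 ht1 =>
      have hp := tstep_tick h1
      have hh : engHeat 1 u = -1 := engHeat_on hu0
      refine ⟨t + engHeat 1 u + γ, u, hEn, ?_⟩
      rw [hp, hh]
      exact .t1 hu0 (by linarith) (by linarith)
    | t1 hu0 ht0 ht1 =>
      have hp := tstep_tick h1
      have hh : engHeat 1 u = -1 := engHeat_on hu0
      refine ⟨t + engHeat 1 u + γ, u, hEn, ?_⟩
      rw [hp, hh]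
      exact .t0 hu0 (by linarith) (by linarith)
    | t0 hu0 ht0 ht1 =>
      exact ((h2 ⟨mkE t u, G2 t⟩)
        (CStepU.sensRead (ustep_prefRead_intro 0 G2 t) h3 (readSensor_self t u))).elim
    | coolOff hu0 ht0 ht1 =>
      exact ((h2 ⟨updateAct (mkE t u) 0 valOff, .tick P1⟩)
        (CStepU.actWrite ustep_prefWrite_intro h3)).elim

/-! ### Progress -/

theorem progress {M : CPS} (hM : Inv M) :
    ∃ (N : CPS) (β : Label), (β = Label.tau ∨ β = Label.tick) ∧ CStep M β N := by
  obtain ⟨E, P⟩ := M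
  obtain ⟨t, u, hE, hS⟩ := hM
  have hE' : E = mkE t u := hE
  subst hE'
  cases hS with
  | idle1 hu0 ht0 ht1 =>
    exact ⟨⟨mkE t u, Fc t⟩, .tau, Or.inl rfl,
      CStepU.sensRead (ustep_P1_intro t)
        (invHolds_mkE u ht0 (by linarith)) (readSensor_self t u)⟩
  | idle2 hu0 ht0 ht1 =>
    exact ⟨⟨mkE t u, Fc t⟩, .tau, Or.inl rfl,
      CStepU.sensRead (ustep_prefRead_intro 0 Fc t)
        (invHolds_mkE u ht0 (by linarith)) (readSensor_self t u)⟩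
  | tickIdle hu0 ht0 ht1 =>
    exact ⟨⟨mkE (t + engHeat 1 u + 0) u, P1⟩, .tick, Or.inr rfl,
      TStep.delay, fun N' h => noTau_tick _ _ N' h,
      invHolds_mkE u ht0 (by linarith), self_mem_nextEnv t u⟩
  | coolOn hu0 ht0 ht1 =>
    exact ⟨⟨updateAct (mkE t u) 0 valOn, Kc⟩, .tau, Or.inl rfl,
      CStepU.actWrite ustep_prefWrite_intro
        (invHolds_mkE u (by linarith) (by linarith))⟩
  | kc hu0 ht0 ht1 =>
    exact ⟨⟨mkE (t + engHeat 1 u + 0) u, T 4⟩, .tick, Or.inr rfl,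
      tstep_Kc_intro, fun N' h => noTau_Kc _ N' h,
      invHolds_mkE u (by linarith) (by linarith), self_mem_nextEnv t u⟩
  | t4 hu0 ht0 ht1 =>
    exact ⟨⟨mkE (t + engHeat 1 u + 0) u, T 3⟩, .tick, Or.inr rfl,
      TStep.delay, fun N' h => noTau_tick _ _ N' h,
      invHolds_mkE u (by linarith) (by linarith), self_mem_nextEnv t u⟩
  | t3 hu0 ht0 ht1 =>
    exact ⟨⟨mkE (t + engHeat 1 u + 0) u, T 2⟩, .tick, Or.inr rfl,
      TStep.delay, fun N' h => noTau_tick _ _ N' h,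
      invHolds_mkE u (by linarith) (by linarith), self_mem_nextEnv t u⟩
  | t2 hu0 ht0 ht1 =>
    exact ⟨⟨mkE (t + engHeat 1 u + 0) u, T 1⟩, .tick, Or.inr rfl,
      TStep.delay, fun N' h => noTau_tick _ _ N' h,
      invHolds_mkE u (by linarith) (by linarith), self_mem_nextEnv t u⟩
  | t1 hu0 ht0 ht1 =>
    exact ⟨⟨mkE (t + engHeat 1 u + 0) u, T 0⟩, .tick, Or.inr rfl,
      TStep.delay, fun N' h => noTau_tick _ _ N' h,
      invHolds_mkE u (by linarith) (by linarith), self_mem_nextEnv t u⟩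
  | t0 hu0 ht0 ht1 =>
    exact ⟨⟨mkE t u, G2 t⟩, .tau, Or.inl rfl,
      CStepU.sensRead (ustep_prefRead_intro 0 G2 t)
        (invHolds_mkE u (by linarith) (by linarith)) (readSensor_self t u)⟩
  | coolOff hu0 ht0 ht1 =>
    exact ⟨⟨updateAct (mkE t u) 0 valOff, .tick P1⟩, .tau, Or.inl rfl,
      CStepU.actWrite ustep_prefWrite_intro
        (invHolds_mkE u (by linarith) (by linarith))⟩

theorem inv_Eng : Inv Eng :=
  ⟨0, valOff, rfl, .idle1 (by norm_num [valOff]) le_rfl (by norm_num)⟩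

end

end SafetyAux

/-- **Safety of the engine** (Proposition 1): in any execution trace of `Eng`
every action is `τ` or `tick` (in particular no warning is ever emitted), and
the engine never deadlocks. -/
theorem engine_safety (n : ℕ) (f : ℕ → CPS) (α : ℕ → Label)
    (h0 : f 0 = Eng)
    (hstep : ∀ i < n, CStep (f i) (α i) (f (i+1))) :
    (∀ i < n, α i = .tau ∨ α i = .tick) ∧
    (∃ (N : CPS) (β : Label), (β = .tau ∨ β = .tick) ∧ CStep (f n) β N) := by
  have inv0 : Inv (f 0) := by rw [h0]; exact inv_Eng
  have invAll : ∀ i, i ≤ n → Inv (f i) := by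
    intro i
    induction i with
    | zero => exact fun _ => inv0
    | succ k ih =>
      intro hk
      exact (preserve (ih (by omega)) (hstep k (by omega))).2
  constructor
  · intro i hi
    exact (preserve (invAll i (by omega)) (hstep i hi)).1
  · exact progress (invAll n le_rfl)

end CCPS
end

section
/- Bisimilarity of engine variants (Proposition 3): Eng ≈ Enḡ, i.e., the engine Eng is weakly bisimilar to the variant engine Enḡ obtained from Eng by changing the evolution map so that heat(ξu,cool) = −0.8 (instead of −1) when ξu(cool) = on. -/
namespace CCPS

/-! With cooling power `r ∈ [0.8, 1]` and uncertainty `0.4`, the temperature windows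
of `EngInv r` are preserved by every transition; in particular the five cooling ticks bring a
temperature `≤ 11.5` down to `≤ 9.5`, so the sensor then reads at most `9.6`, the warning branch is
never taken, and the engine only ever performs `τ` and `tick`. A tick is moreover always weakly
reachable. Two sets of configurations with these properties are related by the bisimulation pairing
every configuration of one with every configuration of the other: a `τ` is answered by standing
still and a `tick` by a weak tick. -/

theorem Proc.subst_lift_self (P R : Proc) (n : ℕ) : (P.lift n).subst n R = P := by
  induction P generalizing n R with
  | pvar k =>
    unfold Proc.lift
    split_ifs <;> simp only [Proc.subst] <;> split_ifs <;> first | rfl | omega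
  | _ => simp [Proc.lift, Proc.subst, *]

theorem Proc.lift_ite (p : Prop) [Decidable p] (A B : Proc) (n : ℕ) :
    (if p then A else B).lift n = if p then A.lift n else B.lift n := by
  split <;> rfl

theorem Proc.subst_ite (p : Prop) [Decidable p] (A B : Proc) (n : ℕ) (R : Proc) :
    (if p then A else B).subst n R = if p then A.subst n R else B.subst n R := by
  split <;> rfl

section ProcessSteps

variable {P Q : Proc} {l : Label}

theorem ustep_fix_iff : UStep (.fix P) l Q ↔ UStep P.unfold l Q :=
  ⟨fun h => by cases h; assumption, .unfold⟩

theorem tstep_fix_iff : TStep (.fix P) Q ↔ TStep P.unfold Q :=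
  ⟨fun h => by cases h; assumption, .unfold⟩

theorem tstep_tick_iff : TStep (.tick P) Q ↔ Q = P :=
  ⟨by rintro ⟨⟩; rfl, by rintro rfl; exact .delay⟩

theorem ustep_prefRead_iff {s : SensName} {f : Val → Proc} :
    UStep (prefRead s f) l Q ↔ ∃ v, l = .read s v ∧ Q = f v := by
  rw [prefRead, ustep_fix_iff]
  simp only [Proc.unfold, Proc.subst, Proc.subst_lift_self, if_true]
  constructor
  · rintro ⟨⟩; exact ⟨_, rfl, rfl⟩
  · rintro ⟨v, rfl, rfl⟩; exact .read

theorem ustep_prefWrite_iff {a : ActName} {w : Val} :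
    UStep (prefWrite a w P) l Q ↔ l = .write a w ∧ Q = P := by
  rw [prefWrite, ustep_fix_iff]
  simp only [Proc.unfold, Proc.subst, Proc.subst_lift_self, if_true]
  constructor
  · rintro ⟨⟩; exact ⟨rfl, rfl⟩
  · rintro ⟨rfl, rfl⟩; exact .write

end ProcessSteps

section SystemSteps

variable {E : Env} {P : Proc} {α : Label} {N : CPS}

theorem CStepU.of_ustep_imp {P' : Proc} (hP : ∀ {l Q}, UStep P l Q → UStep P' l Q)
    (h : CStepU ⟨E, P⟩ α N) : CStepU ⟨E, P'⟩ α N := by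
  cases h with
  | out hu hE => exact .out (hP hu) hE
  | inp hu hE => exact .inp (hP hu) hE
  | sensRead hu hE hv => exact .sensRead (hP hu) hE hv
  | actWrite hu hE => exact .actWrite (hP hu) hE
  | tau hu hE => exact .tau (hP hu) hE

theorem cstep_fix_iff : CStep ⟨E, .fix P⟩ α N ↔ CStep ⟨E, P.unfold⟩ α N := by
  have hU {α N} : CStepU ⟨E, .fix P⟩ α N ↔ CStepU ⟨E, P.unfold⟩ α N :=
    ⟨.of_ustep_imp ustep_fix_iff.1, .of_ustep_imp ustep_fix_iff.2⟩
  cases α <;> simp only [CStep, hU, tstep_fix_iff]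

theorem cstep_iff_cstepU {M : CPS} (hτ : ∃ N', CStepU M .tau N') :
    CStep M α N ↔ CStepU M α N := by
  cases α with
  | tick => exact ⟨fun h => (h.2.1 _ hτ.choose_spec).elim, nofun⟩
  | _ => rfl

theorem cstep_tick_iff :
    CStep ⟨E, .tick P⟩ α N ↔ α = .tick ∧ invHolds E ∧ ∃ E' ∈ nextEnv E, N = ⟨E', P⟩ := by
  have hU {α N} : ¬ CStepU ⟨E, .tick P⟩ α N := by
    rintro (⟨⟨⟩⟩ | ⟨⟨⟩⟩ | ⟨⟨⟩⟩ | ⟨⟨⟩⟩ | ⟨⟨⟩⟩)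
  cases α with
  | tick =>
    simp only [CStep, tstep_tick_iff, hU, not_false_eq_true, implies_true, true_and]
    constructor
    · rintro ⟨hP, hE, hN⟩
      exact ⟨hE, N.env, hN, by rw [← hP]⟩
    · rintro ⟨hE, E', hE', rfl⟩
      exact ⟨rfl, hE, hE'⟩
  | _ => simpa [CStep] using hU

theorem cstep_prefRead_iff {s : SensName} {f : Val → Proc} (hE : invHolds E)
    (hs : (readSensor E s).Nonempty) :
    CStep ⟨E, prefRead s f⟩ α N ↔ α = .tau ∧ ∃ v ∈ readSensor E s, N = ⟨E, f v⟩ := by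
  obtain ⟨v₀, hv₀⟩ := hs
  rw [cstep_iff_cstepU ⟨_, .sensRead (ustep_prefRead_iff.2 ⟨v₀, rfl, rfl⟩) hE hv₀⟩]
  constructor
  · intro h
    cases h with
    | sensRead hu _ hv =>
      obtain ⟨v, hl, rfl⟩ := ustep_prefRead_iff.1 hu
      cases hl
      exact ⟨rfl, _, hv, rfl⟩
    | _ => obtain ⟨v, hl, -⟩ := ustep_prefRead_iff.1 ‹UStep _ _ _›; cases hl
  · rintro ⟨rfl, v, hv, rfl⟩
    exact .sensRead (ustep_prefRead_iff.2 ⟨v, rfl, rfl⟩) hE hv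

theorem cstep_prefWrite_iff {a : ActName} {w : Val} (hE : invHolds E) :
    CStep ⟨E, prefWrite a w P⟩ α N ↔ α = .tau ∧ N = ⟨updateAct E a w, P⟩ := by
  rw [cstep_iff_cstepU ⟨_, .actWrite (ustep_prefWrite_iff.2 ⟨rfl, rfl⟩) hE⟩]
  constructor
  · intro h
    cases h with
    | actWrite hu _ =>
      obtain ⟨hl, rfl⟩ := ustep_prefWrite_iff.1 hu
      cases hl
      exact ⟨rfl, rfl⟩
    | _ => obtain ⟨hl, -⟩ := ustep_prefWrite_iff.1 ‹UStep _ _ _›; cases hl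
  · rintro ⟨rfl, rfl⟩
    exact .actWrite (ustep_prefWrite_iff.2 ⟨rfl, rfl⟩) hE

end SystemSteps

theorem WeakStep.of_cstep {M N : CPS} {α : Label} (h : CStep M α N) : WeakStep M α N :=
  ⟨M, N, .refl, h, .refl⟩

theorem WeakStep.head {M M₁ N : CPS} {α : Label} (hτ : TauStep M M₁) (h : WeakStep M₁ α N) :
    WeakStep M α N :=
  let ⟨A, B, hA, hAB, hB⟩ := h
  ⟨A, B, .head hτ hA, hAB, hB⟩

structure IsSilentInvariant (I : CPS → Prop) : Prop where
  cstep : ∀ {M α M'}, I M → CStep M α M' → I M' ∧ (α = .tau ∨ α = .tick)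
  exists_weakStep_tick : ∀ {M}, I M → ∃ N, WeakStep M .tick N

namespace IsSilentInvariant

variable {I J : CPS → Prop} {M N : CPS}

theorem weakTau (hI : IsSilentInvariant I) (hM : I M) (h : WeakTau M N) : I N := by
  induction h with
  | refl => exact hM
  | tail _ hs ih => exact (hI.cstep ih hs).1

theorem weakStep (hI : IsSilentInvariant I) {α : Label} (hM : I M) (h : WeakStep M α N) : I N :=
  let ⟨_, _, h₁, h₂, h₃⟩ := h
  hI.weakTau (hI.cstep (hI.weakTau hM h₁) h₂).1 h₃

theorem exists_weakHat (hI : IsSilentInvariant I) (hJ : IsSilentInvariant J) (hM : I M)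
    (hN : J N) {α : Label} {M' : CPS} (hs : CStep M α M') :
    ∃ N', WeakHat N α N' ∧ I M' ∧ J N' := by
  obtain ⟨hM', rfl | rfl⟩ := hI.cstep hM hs
  · exact ⟨N, .refl, hM', hN⟩
  · obtain ⟨N', hN'⟩ := hJ.exists_weakStep_tick hN
    exact ⟨N', hN', hM', hJ.weakStep hN hN'⟩

theorem isBisimulation (hI : IsSilentInvariant I) (hJ : IsSilentInvariant J) :
    IsBisimulation fun M N => I M ∧ J N ∨ J M ∧ I N := by
  refine ⟨fun h => h.symm.imp And.symm And.symm, ?_⟩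
  rintro M N α M' (⟨hM, hN⟩ | ⟨hM, hN⟩) hs
  · obtain ⟨N', hw, hM', hN'⟩ := exists_weakHat hI hJ hM hN hs
    exact ⟨N', hw, .inl ⟨hM', hN'⟩⟩
  · obtain ⟨N', hw, hM', hN'⟩ := exists_weakHat hJ hI hM hN hs
    exact ⟨N', hw, .inr ⟨hM', hN'⟩⟩

theorem bisim (hI : IsSilentInvariant I) (hJ : IsSilentInvariant J) (hM : I M) (hN : J N) :
    Bisim M N :=
  ⟨_, hI.isBisimulation hJ, .inl ⟨hM, hN⟩⟩

end IsSilentInvariant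

def engEnvAt (r t u : ℝ) : Env :=
  { EngEnvN r 0 0 0 with xi_x := fun _ => t, xi_u := fun _ => u }

section EngEnvAt

variable {r t u : ℝ}

theorem invHolds_engEnvAt : invHolds (engEnvAt r t u) ↔ 0 ≤ t ∧ t ≤ 30 :=
  ⟨fun h => h ⟨0, Finset.mem_singleton_self 0⟩, fun h _ => h⟩

theorem readSensor_engEnvAt : readSensor (engEnvAt r t u) 0 = Set.Icc (t - 0.1) (t + 0.1) := by
  ext v
  simp only [readSensor, engEnvAt, EngEnvN, engEps, Set.mem_ofPred_eq]
  constructor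
  · rintro ⟨-, ξ, hξ, rfl⟩
    exact hξ _ ⟨0, Finset.mem_singleton_self 0⟩
  · intro hv
    exact ⟨Finset.mem_singleton_self 0, fun _ => v, fun _ _ => hv, rfl⟩

theorem updateAct_engEnvAt (v : ℝ) : updateAct (engEnvAt r t u) 0 v = engEnvAt r t v := by
  unfold updateAct engEnvAt EngEnvN
  congr 1
  funext b
  simp [Finset.mem_singleton.mp b.2]

theorem mem_nextEnv_engEnvAt {E' : Env} :
    E' ∈ nextEnv (engEnvAt r t u) ↔
      ∃ γ ∈ Set.Icc (-0.4 : ℝ) 0.4, E' = engEnvAt r (t + engHeat r u + γ) u := by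
  simp only [nextEnv, engEnvAt, EngEnvN, engDelta, Set.mem_ofPred_eq]
  constructor
  · rintro ⟨ξ, ⟨γ, hγ, hξ⟩, rfl⟩
    refine ⟨γ, hγ, ?_⟩
    rw [show ξ = fun _ => t + engHeat r u + γ from
      funext fun y => hξ y ⟨0, Finset.mem_singleton_self 0⟩]
  · rintro ⟨γ, hγ, rfl⟩
    exact ⟨_, ⟨γ, hγ, fun _ _ => rfl⟩, rfl⟩

theorem engHeat_valOff : engHeat r valOff = 1 := by norm_num [engHeat, valOff]

theorem engHeat_valOn : engHeat r valOn = -r := by norm_num [engHeat, valOn]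

variable {P : Proc} {α : Label} {N : CPS}

theorem cstep_engEnvAt_tick_iff (h0 : 0 ≤ t) (h30 : t ≤ 30) :
    CStep ⟨engEnvAt r t u, .tick P⟩ α N ↔
      α = .tick ∧ ∃ γ ∈ Set.Icc (-0.4 : ℝ) 0.4, N = ⟨engEnvAt r (t + engHeat r u + γ) u, P⟩ := by
  simp only [cstep_tick_iff, invHolds_engEnvAt, mem_nextEnv_engEnvAt, h0, h30, true_and]
  constructor
  · rintro ⟨rfl, _, ⟨γ, hγ, rfl⟩, rfl⟩
    exact ⟨rfl, γ, hγ, rfl⟩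
  · rintro ⟨rfl, γ, hγ, rfl⟩
    exact ⟨rfl, _, ⟨γ, hγ, rfl⟩, rfl⟩

theorem cstep_engEnvAt_prefRead_iff {f : Val → Proc} (h0 : 0 ≤ t) (h30 : t ≤ 30) :
    CStep ⟨engEnvAt r t u, prefRead 0 f⟩ α N ↔
      α = .tau ∧ ∃ v ∈ Set.Icc (t - 0.1) (t + 0.1), N = ⟨engEnvAt r t u, f v⟩ := by
  have hread : (readSensor (engEnvAt r t u) 0).Nonempty := by
    rw [readSensor_engEnvAt]
    exact ⟨t, by constructor <;> linarith⟩
  rw [cstep_prefRead_iff (invHolds_engEnvAt.2 ⟨h0, h30⟩) hread, readSensor_engEnvAt]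

theorem cstep_engEnvAt_prefWrite_iff {w : Val} (h0 : 0 ≤ t) (h30 : t ≤ 30) :
    CStep ⟨engEnvAt r t u, prefWrite 0 w P⟩ α N ↔ α = .tau ∧ N = ⟨engEnvAt r t w, P⟩ := by
  rw [cstep_prefWrite_iff (invHolds_engEnvAt.2 ⟨h0, h30⟩), updateAct_engEnvAt]

end EngEnvAt

noncomputable section

def coolStop : Proc := prefWrite 0 valOff (.tick (CtrlN 0 0 0))

def coolLoop : Proc :=
  .fix (Proc.ticks 5 (prefRead 0 fun y =>
    if 10 < y then prefOut warningCh 0 (.pvar 0) else coolStop))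

def coolCheck : Proc :=
  prefRead 0 fun y => if 10 < y then prefOut warningCh 0 coolLoop else coolStop

/-- `Cooling` of the paper. -/
def cooling : Proc := prefWrite 0 valOn coolLoop

section ControlSteps

variable {E : Env} {α : Label} {N : CPS}

theorem cstep_ctrl_iff :
    CStep ⟨E, CtrlN 0 0 0⟩ α N ↔
      CStep ⟨E, prefRead 0 fun x => if 10 < x then cooling else .tick (CtrlN 0 0 0)⟩ α N := by
  rw [CtrlN, cstep_fix_iff]
  simp [cooling, coolLoop, coolStop, CtrlN, Proc.unfold, Proc.subst, Proc.lift, Proc.subst_ite,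
    Proc.lift_ite, prefRead, prefWrite, prefOut, Proc.ticks]

theorem cstep_coolLoop_iff :
    CStep ⟨E, coolLoop⟩ α N ↔ CStep ⟨E, .tick (Proc.ticks 4 coolCheck)⟩ α N := by
  rw [coolLoop, cstep_fix_iff]
  simp [coolCheck, coolLoop, coolStop, CtrlN, Proc.unfold, Proc.subst, Proc.lift,
    Proc.subst_ite, Proc.lift_ite, prefRead, prefWrite, prefOut, Proc.ticks]

theorem cstep_coolCheck_iff {r t u : ℝ} (h0 : 0 ≤ t) (ht : t ≤ 9.9) :
    CStep ⟨engEnvAt r t u, coolCheck⟩ α N ↔ α = .tau ∧ N = ⟨engEnvAt r t u, coolStop⟩ := by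
  rw [coolCheck, cstep_engEnvAt_prefRead_iff h0 (by linarith)]
  constructor
  · rintro ⟨rfl, v, hv, rfl⟩
    simp only [show ¬ 10 < v by linarith [hv.2], if_false, and_self]
  · rintro ⟨rfl, rfl⟩
    exact ⟨rfl, t, ⟨by linarith, by linarith⟩,
      by simp only [show ¬ (10 : ℝ) < t by linarith, if_false]⟩

end ControlSteps

/-- After `5 - k` cooling ticks, each changing the temperature by `-r + γ ∈ [-1.4, -0.4]`, the
window `[9.9, 11.5]` at the start of the cooling phase has become the one of `coolingTicks k`. -/
inductive EngInv (r : ℝ) : CPS → Prop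
  | idle {t : ℝ} : 0 ≤ t → t ≤ 11.5 → EngInv r ⟨engEnvAt r t valOff, CtrlN 0 0 0⟩
  | heating {t : ℝ} : 0 ≤ t → t ≤ 10.1 → EngInv r ⟨engEnvAt r t valOff, .tick (CtrlN 0 0 0)⟩
  | switchingOn {t : ℝ} : 9.9 ≤ t → t ≤ 11.5 → EngInv r ⟨engEnvAt r t valOff, cooling⟩
  | coolingStart {t : ℝ} : 9.9 ≤ t → t ≤ 11.5 → EngInv r ⟨engEnvAt r t valOn, coolLoop⟩
  | coolingTicks {t : ℝ} (k : ℕ) : k ≤ 4 → 2.9 + 1.4 * k ≤ t → t ≤ 9.5 + 0.4 * k →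
      EngInv r ⟨engEnvAt r t valOn, Proc.ticks k coolCheck⟩
  | switchingOff {t : ℝ} : 2.9 ≤ t → t ≤ 9.5 → EngInv r ⟨engEnvAt r t valOn, coolStop⟩

namespace EngInv

variable {r : ℝ} {M : CPS}

theorem cstep (hr : 0.8 ≤ r) (hr1 : r ≤ 1) {M' : CPS} {α : Label}
    (h : EngInv r M) (hs : CStep M α M') : EngInv r M' ∧ (α = .tau ∨ α = .tick) := by
  cases h with
  | idle h0 h1 =>
    rw [cstep_ctrl_iff, cstep_engEnvAt_prefRead_iff h0 (by linarith)] at hs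
    obtain ⟨rfl, v, hv, rfl⟩ := hs
    refine ⟨?_, .inl rfl⟩
    by_cases hv10 : 10 < v
    · simpa only [hv10, if_true] using switchingOn (r := r) (by linarith [hv.2]) h1
    · simpa only [hv10, if_false] using heating (r := r) h0 (by linarith [hv.1])
  | heating h0 h1 =>
    rw [cstep_engEnvAt_tick_iff h0 (by linarith)] at hs
    obtain ⟨rfl, γ, hγ, rfl⟩ := hs
    rw [engHeat_valOff]
    exact ⟨.idle (by linarith [hγ.1]) (by linarith [hγ.2]), .inr rfl⟩
  | switchingOn h0 h1 =>
    rw [cooling, cstep_engEnvAt_prefWrite_iff (by linarith) (by linarith)] at hs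
    obtain ⟨rfl, rfl⟩ := hs
    exact ⟨.coolingStart h0 h1, .inl rfl⟩
  | coolingStart h0 h1 =>
    rw [cstep_coolLoop_iff, cstep_engEnvAt_tick_iff (by linarith) (by linarith)] at hs
    obtain ⟨rfl, γ, hγ, rfl⟩ := hs
    rw [engHeat_valOn]
    refine ⟨.coolingTicks 4 le_rfl ?_ ?_, .inr rfl⟩ <;> norm_num <;> linarith [hγ.1, hγ.2]
  | coolingTicks k hk h0 h1 =>
    cases k with
    | zero =>
      simp only [Nat.cast_zero, mul_zero, add_zero] at h0 h1
      rw [Proc.ticks, cstep_coolCheck_iff (by linarith) (by linarith)] at hs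
      obtain ⟨rfl, rfl⟩ := hs
      exact ⟨.switchingOff h0 h1, .inl rfl⟩
    | succ k =>
      push_cast at h0 h1
      rw [Proc.ticks, cstep_engEnvAt_tick_iff (by linarith) (by linarith)] at hs
      obtain ⟨rfl, γ, hγ, rfl⟩ := hs
      rw [engHeat_valOn]
      exact ⟨.coolingTicks k (by omega) (by linarith [hγ.1]) (by linarith [hγ.2]), .inr rfl⟩
  | switchingOff h0 h1 =>
    rw [coolStop, cstep_engEnvAt_prefWrite_iff (by linarith) (by linarith)] at hs
    obtain ⟨rfl, rfl⟩ := hs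
    exact ⟨.heating (by linarith) (by linarith), .inl rfl⟩

theorem exists_weakStep_tick (h : EngInv r M) : ∃ N, WeakStep M .tick N := by
  have ofTick {t u : ℝ} {P : Proc} (h0 : 0 ≤ t) (h30 : t ≤ 30) :
      ∃ N, WeakStep ⟨engEnvAt r t u, .tick P⟩ .tick N :=
    ⟨_, .of_cstep ((cstep_engEnvAt_tick_iff h0 h30).2 ⟨rfl, 0, by norm_num, rfl⟩)⟩
  have ofCoolLoop {t : ℝ} (h0 : 0 ≤ t) (h30 : t ≤ 30) :
      ∃ N, WeakStep ⟨engEnvAt r t valOn, coolLoop⟩ .tick N :=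
    ⟨_, .of_cstep (cstep_coolLoop_iff.2
      ((cstep_engEnvAt_tick_iff h0 h30).2 ⟨rfl, 0, by norm_num, rfl⟩))⟩
  have ofCooling {t : ℝ} (h0 : 0 ≤ t) (h30 : t ≤ 30) :
      ∃ N, WeakStep ⟨engEnvAt r t valOff, cooling⟩ .tick N :=
    (ofCoolLoop h0 h30).imp fun _ => .head ((cstep_engEnvAt_prefWrite_iff h0 h30).2 ⟨rfl, rfl⟩)
  have ofCoolStop {t : ℝ} (h0 : 0 ≤ t) (h30 : t ≤ 30) :
      ∃ N, WeakStep ⟨engEnvAt r t valOn, coolStop⟩ .tick N :=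
    (ofTick h0 h30).imp fun _ => .head ((cstep_engEnvAt_prefWrite_iff h0 h30).2 ⟨rfl, rfl⟩)
  cases h with
  | @idle t h0 h1 =>
    have hread : TauStep ⟨engEnvAt r t valOff, CtrlN 0 0 0⟩
        ⟨engEnvAt r t valOff, if 10 < t then cooling else .tick (CtrlN 0 0 0)⟩ :=
      cstep_ctrl_iff.2 ((cstep_engEnvAt_prefRead_iff h0 (by linarith)).2
        ⟨rfl, t, ⟨by linarith, by linarith⟩, rfl⟩)
    split_ifs at hread
    · exact (ofCooling (by linarith) (by linarith)).imp fun _ => .head hread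
    · exact (ofTick h0 (by linarith)).imp fun _ => .head hread
  | heating h0 h1 => exact ofTick h0 (by linarith)
  | switchingOn h0 h1 => exact ofCooling (by linarith) (by linarith)
  | coolingStart h0 h1 => exact ofCoolLoop (by linarith) (by linarith)
  | @coolingTicks t k hk h0 h1 =>
    cases k with
    | zero =>
      simp only [Nat.cast_zero, mul_zero, add_zero] at h0 h1
      have hread : TauStep ⟨engEnvAt r t valOn, coolCheck⟩ ⟨engEnvAt r t valOn, coolStop⟩ :=
        (cstep_coolCheck_iff (by linarith) (by linarith)).2 ⟨rfl, rfl⟩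
      exact (ofCoolStop (by linarith) (by linarith)).imp fun _ => .head hread
    | succ k =>
      push_cast at h0 h1
      exact ofTick (by linarith) (by linarith)
  | switchingOff h0 h1 => exact ofCoolStop (by linarith) (by linarith)

theorem isSilentInvariant (hr : 0.8 ≤ r) (hr1 : r ≤ 1) : IsSilentInvariant (EngInv r) :=
  ⟨cstep hr hr1, exists_weakStep_tick⟩

theorem engGen (r : ℝ) : EngInv r (EngGen r) :=
  .idle le_rfl (by norm_num)

end EngInv

end

/-- **Bisimilarity of engine variants** (Proposition 3): `Eng ≈ Enḡ`, where
`Enḡ` uses cooling power 0.8 instead of 1. -/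
theorem eng_bisim_engBar : Bisim Eng EngBar := by
  exact (EngInv.isSilentInvariant (by norm_num) (by norm_num)).bisim
    (EngInv.isSilentInvariant (by norm_num) (by norm_num)) (EngInv.engGen 1) (EngInv.engGen 0.8)

end CCPS
end
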